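/- For all dominant weights λ = (λ₁,λ₂) and μ = (μ₁,μ₂) in (ℤ^{≥0})², the symmetric orbit functions of A₂ satisfy the continuous orthogonality relation ∫_T C_λ(a₁,a₂) · conj(C_μ(a₁,a₂)) da₁ da₂ = δ_{λ,μ} / h_λ, where the integral is the Lebesgue integral over T, conj denotes complex conjugation, and δ_{λ,μ} is the Kronecker delta. -/

import Mathlib

open MeasureTheory Real

noncomputable section

/-- The fundamental domain `T` of the affine Weyl group of `A₂` in coroot coordinates. -/
def T : Set (ℝ × ℝ) :=
  {a | 0 ≤ 2 * a.1 - a.2 ∧ 0 ≤ 2 * a.2 - a.1 ∧ a.1 + a.2 ≤ 1}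

/-- The order `h_λ` of the stabilizer of the dominant weight `λ` for `A₂`. -/
def hwt (l : ℕ × ℕ) : ℕ :=
  if l.1 = 0 ∧ l.2 = 0 then 6
  else if l.1 = 0 ∨ l.2 = 0 then 2
  else 1

/-- The symmetric orbit function `C_{(λ₁,λ₂)}` of `A₂`. -/
def Cfun (l : ℕ × ℕ) (a : ℝ × ℝ) : ℂ :=
  (hwt l : ℂ)⁻¹ *
    (Complex.exp (2 * π * Complex.I * ((l.1 : ℂ) * a.1 + (l.2 : ℂ) * a.2)) +
     Complex.exp (2 * π * Complex.I * (-(l.1 : ℂ) * a.1 + ((l.1 : ℂ) + l.2) * a.2)) +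
     Complex.exp (2 * π * Complex.I * (((l.1 : ℂ) + l.2) * a.1 - (l.2 : ℂ) * a.2)) +
     Complex.exp (2 * π * Complex.I * ((l.2 : ℂ) * a.1 - ((l.1 : ℂ) + l.2) * a.2)) +
     Complex.exp (2 * π * Complex.I * (-((l.1 : ℂ) + l.2) * a.1 + (l.1 : ℂ) * a.2)) +
     Complex.exp (2 * π * Complex.I * (-(l.2 : ℂ) * a.1 - (l.1 : ℂ) * a.2)))

/-!
Write `e_ν(a) = exp(2πi(ν₁a₁ + ν₂a₂))` and `O_ν = ∑_{w ∈ W} e_{wν}`. Then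
`C_λ · conj C_μ = (h_λ h_μ)⁻¹ ∑_{w ∈ W} O_{wλ - μ}`, and `wλ = μ` holds for `h_λ` elements `w`
if `λ = μ` and for none otherwise, so everything reduces to `∫_T O_ν = δ_{ν,0}`.

This follows from the affine symmetries of the alcove `T`. Its rotation of order three turns
`∫_T e_ν` into `ζ · ∫_T e_{rν}`, where `r ∈ W` and the cube root of unity `ζ` is `1` exactly when
`ν` lies in the root lattice; off the root lattice the orbit integral therefore vanishes. On the
root lattice, the rotation and the reflection `a ↦ (a₂, a₁)` reduce it to
`3 (∫_T e_ν + ∫_T e_{-ν})`, and `T` together with `(1, 1) - T` tiles a fundamental parallelogram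
of the coweight lattice, over which `e_ν` integrates to `δ_{ν,0} / 3`.
-/

section AffineChangeOfVariables

variable {E F : Type*} [NormedAddCommGroup E] [NormedSpace ℝ E] [FiniteDimensional ℝ E]
  [MeasurableSpace E] [BorelSpace E] (μ : Measure E) [μ.IsAddHaarMeasure] [NormedAddCommGroup F]
  [NormedSpace ℝ F] {L : E →L[ℝ] E}

theorem setIntegral_image_affine (hL : L.det ≠ 0) (t : E) {s : Set E} (hs : MeasurableSet s)
    (f : E → F) :
    ∫ x in (fun x => L x + t) '' s, f x ∂μ = |L.det| • ∫ x in s, f (L x + t) ∂μ := by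
  have hinj : Function.Injective L := (L.toContinuousLinearEquivOfDetNeZero hL).injective
  rw [integral_image_eq_integral_abs_det_fderiv_smul μ hs
    (fun x _ => (L.hasFDerivAt.add_const t).hasFDerivWithinAt)
    (fun x _ y _ hxy => hinj (add_right_cancel hxy)), integral_smul]

theorem setIntegral_comp_affine_of_image_eq (hL : |L.det| = 1) (t : E) {s : Set E}
    (hs : MeasurableSet s) (himage : (fun x => L x + t) '' s = s) (f : E → F) :
    ∫ x in s, f (L x + t) ∂μ = ∫ x in s, f x ∂μ := by
  have hdet : L.det ≠ 0 := fun h => by simp [h] at hL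
  rw [← one_smul ℝ (∫ x in s, f (L x + t) ∂μ), ← hL, ← setIntegral_image_affine μ hdet t hs,
    himage]

end AffineChangeOfVariables

def matCLM (a b c d : ℝ) : (ℝ × ℝ) →L[ℝ] ℝ × ℝ :=
  LinearMap.toContinuousLinearMap
    (Matrix.toLin (Module.Basis.finTwoProd ℝ) (Module.Basis.finTwoProd ℝ) !![a, b; c, d])

@[simp]
theorem matCLM_apply (a b c d : ℝ) (x : ℝ × ℝ) :
    matCLM a b c d x = (a * x.1 + b * x.2, c * x.1 + d * x.2) :=
  Matrix.toLin_finTwoProd_apply a b c d x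

theorem matCLM_det (a b c d : ℝ) : (matCLM a b c d).det = a * d - b * c := by
  rw [ContinuousLinearMap.det, matCLM, LinearMap.coe_toContinuousLinearMap, LinearMap.det_toLin,
    Matrix.det_fin_two_of]

theorem volume_setOf_fst_add_snd_eq (c : ℝ) : volume {a : ℝ × ℝ | a.1 + a.2 = c} = 0 := by
  rw [Measure.volume_eq_prod, Measure.prod_apply (measurableSet_eq_fun (by fun_prop) (by fun_prop))]
  have hslice (x : ℝ) : {y : ℝ | x + y = c} = {c - x} := by
    ext y
    simp only [Set.mem_ofPred_eq, Set.mem_singleton_iff]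
    constructor <;> intro <;> linarith
  simp [hslice]

theorem integral_Icc_exp_two_pi_I_mul_int (n : ℤ) :
    ∫ x in Set.Icc (0 : ℝ) 1, Complex.exp (2 * π * Complex.I * n * x) = if n = 0 then 1 else 0 := by
  rw [integral_Icc_eq_integral_Ioc, ← intervalIntegral.integral_of_le zero_le_one]
  split_ifs with hn
  · simp [hn]
  · have hc : 2 * π * Complex.I * n ≠ 0 := by simp [hn, Real.pi_ne_zero, Complex.I_ne_zero]
    rw [integral_exp_mul_complex hc, Complex.ofReal_one, Complex.ofReal_zero, mul_one, mul_zero,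
      Complex.exp_zero, show 2 * π * Complex.I * n = n * (2 * π * Complex.I) by ring,
      Complex.exp_int_mul_two_pi_mul_I, sub_self, zero_div]

namespace A2

def toWeight (l : ℕ × ℕ) : ℤ × ℤ := ((l.1 : ℤ), (l.2 : ℤ))

def rotate (ν : ℤ × ℤ) : ℤ × ℤ := (-ν.1 - ν.2, ν.1)

/-- The Weyl group `W ≅ S₃` is the rotation group `{1, r, r²}` together with its coset through
the longest element `w₀ ν = -ν.swap`. -/
def weylOrbit (ν : ℤ × ℤ) : Fin 6 → ℤ × ℤ :=
  ![ν, rotate ν, rotate (rotate ν), -ν.swap, rotate (-ν.swap), rotate (rotate (-ν.swap))]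

theorem rotate_rotate_rotate (ν : ℤ × ℤ) : rotate (rotate (rotate ν)) = ν := by
  ext <;> simp only [rotate] <;> ring

theorem weylOrbit_add (ν μ : ℤ × ℤ) (k : Fin 6) :
    weylOrbit (ν + μ) k = weylOrbit ν k + weylOrbit μ k := by
  fin_cases k <;> ext <;> simp [weylOrbit, rotate] <;> ring

theorem weylOrbit_neg (ν : ℤ × ℤ) (k : Fin 6) : weylOrbit (-ν) k = -weylOrbit ν k := by
  fin_cases k <;> ext <;> simp [weylOrbit, rotate] <;> ring

theorem sum_weylOrbit_weylOrbit {M : Type*} [AddCommMonoid M] (f : ℤ × ℤ → M) (ν : ℤ × ℤ)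
    (k : Fin 6) : ∑ j, f (weylOrbit (weylOrbit ν j) k) = ∑ j, f (weylOrbit ν j) := by
  fin_cases k <;> simp [Fin.sum_univ_six, weylOrbit, rotate, Prod.swap] <;> ring_nf <;> abel

theorem card_weylOrbit_eq (l m : ℕ × ℕ) :
    (Finset.univ.filter fun j => weylOrbit (toWeight l) j = toWeight m).card =
      if l = m then hwt l else 0 := by
  obtain ⟨l₁, l₂⟩ := l
  obtain ⟨m₁, m₂⟩ := m
  rw [Finset.card_filter, Fin.sum_univ_six]
  simp only [weylOrbit, rotate, toWeight, hwt, Matrix.cons_val, Prod.swap, Prod.neg_mk,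
    Prod.mk.injEq]
  split_ifs <;> omega

/-- Weights are in fundamental-weight coordinates and points in simple-coroot coordinates; these
bases are dual, so the pairing is `ν₁a₁ + ν₂a₂`. -/
def expPairing (ν : ℤ × ℤ) (a : ℝ × ℝ) : ℂ :=
  Complex.exp (2 * π * Complex.I * (ν.1 * a.1 + ν.2 * a.2))

def orbitSum (ν : ℤ × ℤ) (a : ℝ × ℝ) : ℂ := ∑ k, expPairing (weylOrbit ν k) a

theorem continuous_expPairing (ν : ℤ × ℤ) : Continuous (expPairing ν) := by
  unfold expPairing
  fun_prop

theorem expPairing_add (ν μ : ℤ × ℤ) (a : ℝ × ℝ) :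
    expPairing (ν + μ) a = expPairing ν a * expPairing μ a := by
  simp only [expPairing, ← Complex.exp_add, Prod.fst_add, Prod.snd_add]
  push_cast
  ring_nf

theorem conj_expPairing (ν : ℤ × ℤ) (a : ℝ × ℝ) :
    starRingEnd ℂ (expPairing ν a) = expPairing (-ν) a := by
  simp only [expPairing, ← Complex.exp_conj, map_mul, map_add, Complex.conj_I,
    Complex.conj_ofReal, map_intCast, map_ofNat, Prod.fst_neg, Prod.snd_neg]
  push_cast
  ring_nf

theorem conj_orbitSum (ν : ℤ × ℤ) (a : ℝ × ℝ) :
    starRingEnd ℂ (orbitSum ν a) = orbitSum (-ν) a := by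
  simp only [orbitSum, map_sum, conj_expPairing, weylOrbit_neg]

theorem orbitSum_mul (ν μ : ℤ × ℤ) (a : ℝ × ℝ) :
    orbitSum ν a * orbitSum μ a = ∑ j, orbitSum (weylOrbit ν j + μ) a := by
  simp only [orbitSum, weylOrbit_add, expPairing_add]
  rw [Finset.sum_comm]
  simp only [← Finset.sum_mul, sum_weylOrbit_weylOrbit (fun ν' => expPairing ν' a), Finset.mul_sum]

theorem Cfun_eq (l : ℕ × ℕ) (a : ℝ × ℝ) : Cfun l a = (hwt l : ℂ)⁻¹ * orbitSum (toWeight l) a := by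
  simp only [Cfun, orbitSum, toWeight, Fin.sum_univ_six, weylOrbit, rotate, Matrix.cons_val,
    expPairing, Prod.swap, Prod.neg_mk]
  push_cast
  ring_nf

theorem integrableOn_expPairing (ν : ℤ × ℤ) {s : Set (ℝ × ℝ)} (hs : IsCompact s) :
    IntegrableOn (expPairing ν) s :=
  (continuous_expPairing ν).continuousOn.integrableOn_compact hs

theorem integrableOn_orbitSum (ν : ℤ × ℤ) {s : Set (ℝ × ℝ)} (hs : IsCompact s) :
    IntegrableOn (orbitSum ν) s :=
  integrable_finsetSum _ fun _ _ => integrableOn_expPairing _ hs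

theorem mem_T {a : ℝ × ℝ} : a ∈ T ↔ 0 ≤ 2 * a.1 - a.2 ∧ 0 ≤ 2 * a.2 - a.1 ∧ a.1 + a.2 ≤ 1 :=
  Iff.rfl

theorem isClosed_T : IsClosed T := by
  simp only [T, Set.ofPred_and]
  exact (isClosed_le continuous_const (by fun_prop)).inter
    ((isClosed_le continuous_const (by fun_prop)).inter
      (isClosed_le (by fun_prop) continuous_const))

theorem isCompact_T : IsCompact T := by
  refine (isCompact_Icc (a := ((0 : ℝ), (0 : ℝ))) (b := (1, 1))).of_isClosed_subset isClosed_T ?_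
  rintro a ⟨h₁, h₂, h₃⟩
  exact ⟨⟨by linarith, by linarith⟩, ⟨by linarith, by linarith⟩⟩

theorem image_swap_T : (fun a => matCLM 0 1 1 0 a + 0) '' T = T := by
  have hinv : Function.Involutive fun a => matCLM 0 1 1 0 a + 0 := fun a => by ext <;> simp
  rw [Set.image_eq_preimage_of_inverse hinv.leftInverse hinv.rightInverse]
  ext a
  simp only [Set.mem_preimage, mem_T, matCLM_apply, add_zero]
  constructor <;> rintro ⟨h₁, h₂, h₃⟩ <;> refine ⟨?_, ?_, ?_⟩ <;> linarith

/-- The rotation `0 ↦ (1/3, 2/3) ↦ (2/3, 1/3) ↦ 0` of the vertices of `T`. -/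
theorem image_rotate_T : (fun a => matCLM (-1) 1 (-1) 0 a + (1 / 3, 2 / 3)) '' T = T := by
  rw [Set.image_eq_preimage_of_inverse (g := fun a => matCLM 0 (-1) 1 (-1) a + (2 / 3, 1 / 3))
    (fun a => by ext <;> simp; ring) (fun a => by ext <;> simp; ring)]
  ext a
  simp only [Set.mem_preimage, mem_T, matCLM_apply, Prod.fst_add, Prod.snd_add]
  constructor <;> rintro ⟨h₁, h₂, h₃⟩ <;> refine ⟨?_, ?_, ?_⟩ <;> linarith

/-- The parallelogram spanned by the fundamental coweights `(2/3, 1/3)` and `(1/3, 2/3)`. -/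
def parallelogram : Set (ℝ × ℝ) :=
  (fun x => matCLM (2 / 3) (1 / 3) (1 / 3) (2 / 3) x + 0) '' Set.Icc 0 1 ×ˢ Set.Icc 0 1

theorem union_image_neg_add_T :
    T ∪ (fun a => matCLM (-1) 0 0 (-1) a + (1, 1)) '' T = parallelogram := by
  have hinv : Function.Involutive fun a => matCLM (-1) 0 0 (-1) a + (1, 1) :=
    fun a => by ext <;> simp
  rw [parallelogram, Set.image_eq_preimage_of_inverse hinv.leftInverse hinv.rightInverse,
    Set.image_eq_preimage_of_inverse (g := fun a => matCLM 2 (-1) (-1) 2 a + 0)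
      (fun a => by ext <;> simp <;> ring) (fun a => by ext <;> simp <;> ring)]
  ext a
  simp only [Set.mem_union, Set.mem_preimage, mem_T, matCLM_apply, Prod.fst_add, Prod.snd_add,
    add_zero, Set.mem_prod, Set.mem_Icc]
  constructor
  · rintro (⟨h₁, h₂, h₃⟩ | ⟨h₁, h₂, h₃⟩) <;> refine ⟨⟨?_, ?_⟩, ?_, ?_⟩ <;> linarith
  · rintro ⟨⟨h₁, h₂⟩, h₃, h₄⟩
    rcases le_total (a.1 + a.2) 1 with h | h
    · left; refine ⟨?_, ?_, ?_⟩ <;> linarith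
    · right; refine ⟨?_, ?_, ?_⟩ <;> linarith

theorem inter_image_neg_add_T_subset :
    T ∩ (fun a => matCLM (-1) 0 0 (-1) a + (1, 1)) '' T ⊆ {a | a.1 + a.2 = 1} := by
  rintro _ ⟨⟨-, -, h⟩, b, ⟨h₁, h₂, h₃⟩, rfl⟩
  simp only [matCLM_apply, Prod.fst_add, Prod.snd_add, Set.mem_ofPred_eq] at h ⊢
  linarith

theorem expPairing_swap (ν : ℤ × ℤ) (a : ℝ × ℝ) :
    expPairing ν (matCLM 0 1 1 0 a + 0) = expPairing ν.swap a := by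
  simp only [expPairing, matCLM_apply, add_zero, Prod.fst_swap, Prod.snd_swap]
  ring_nf

theorem expPairing_rotate (ν : ℤ × ℤ) (a : ℝ × ℝ) :
    expPairing ν (matCLM (-1) 1 (-1) 0 a + (1 / 3, 2 / 3)) =
      expPairing ν (1 / 3, 2 / 3) * expPairing (rotate ν) a := by
  simp only [expPairing, matCLM_apply, rotate, ← Complex.exp_add, Prod.fst_add, Prod.snd_add]
  push_cast
  ring_nf

theorem expPairing_neg_add (ν : ℤ × ℤ) (a : ℝ × ℝ) :
    expPairing ν (matCLM (-1) 0 0 (-1) a + (1, 1)) = expPairing (-ν) a := by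
  simp only [expPairing, matCLM_apply, Prod.fst_add, Prod.snd_add, Prod.fst_neg, Prod.snd_neg]
  refine Complex.exp_eq_exp_iff_exists_int.2 ⟨ν.1 + ν.2, ?_⟩
  push_cast
  ring

theorem expPairing_rotate_coweight (ν : ℤ × ℤ) :
    expPairing (rotate ν) (1 / 3, 2 / 3) = expPairing ν (1 / 3, 2 / 3) := by
  simp only [expPairing, rotate]
  refine Complex.exp_eq_exp_iff_exists_int.2 ⟨-ν.2, ?_⟩
  push_cast
  ring

theorem expPairing_coweight_eq_one_iff (ν : ℤ × ℤ) :
    expPairing ν (1 / 3, 2 / 3) = 1 ↔ 3 ∣ ν.1 + 2 * ν.2 := by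
  rw [expPairing, Complex.exp_eq_one_iff]
  constructor
  · rintro ⟨n, hn⟩
    refine ⟨n, ?_⟩
    have : ((ν.1 + 2 * ν.2 : ℤ) : ℂ) = (3 * n : ℤ) := by
      have := Complex.two_pi_I_ne_zero
      push_cast at hn ⊢
      field_simp at hn ⊢
      linear_combination hn
    exact_mod_cast this
  · rintro ⟨n, hn⟩
    refine ⟨n, ?_⟩
    have : (ν.1 : ℂ) + 2 * ν.2 = 3 * n := by exact_mod_cast hn
    push_cast
    linear_combination (2 * π * Complex.I / 3) * this

theorem integral_expPairing_swap (ν : ℤ × ℤ) :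
    ∫ a in T, expPairing ν a = ∫ a in T, expPairing ν.swap a := by
  simp only [← expPairing_swap]
  exact (setIntegral_comp_affine_of_image_eq volume (by simp [matCLM_det]) 0
    isClosed_T.measurableSet image_swap_T _).symm

theorem integral_expPairing_rotate (ν : ℤ × ℤ) :
    ∫ a in T, expPairing ν a = expPairing ν (1 / 3, 2 / 3) * ∫ a in T, expPairing (rotate ν) a := by
  rw [← integral_const_mul]
  simp only [← expPairing_rotate]
  exact (setIntegral_comp_affine_of_image_eq volume (by simp [matCLM_det]) _
    isClosed_T.measurableSet image_rotate_T _).symm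

theorem integral_expPairing_rotate_orbit (ν : ℤ × ℤ) :
    (∫ a in T, expPairing ν a) + (∫ a in T, expPairing (rotate ν) a) +
        ∫ a in T, expPairing (rotate (rotate ν)) a =
      if 3 ∣ ν.1 + 2 * ν.2 then 3 * ∫ a in T, expPairing ν a else 0 := by
  set ζ := expPairing ν (1 / 3, 2 / 3)
  have h₀ := integral_expPairing_rotate ν
  have h₁ := integral_expPairing_rotate (rotate ν)
  have h₂ := integral_expPairing_rotate (rotate (rotate ν))
  rw [expPairing_rotate_coweight] at h₁
  rw [expPairing_rotate_coweight, expPairing_rotate_coweight, rotate_rotate_rotate] at h₂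
  split_ifs with h
  · rw [(expPairing_coweight_eq_one_iff ν).2 h, one_mul] at h₀ h₁
    linear_combination -2 * h₀ - h₁
  · -- the sum `S` of the three integrals satisfies `S = ζ S` with `ζ ≠ 1`
    have hζ : ζ ≠ 1 := mt (expPairing_coweight_eq_one_iff ν).1 h
    refine (mul_eq_zero.1 (?_ : (1 - ζ) * _ = 0)).resolve_left (sub_ne_zero.2 hζ.symm)
    linear_combination h₀ + h₁ + h₂

theorem integral_expPairing_add_neg (ν : ℤ × ℤ) :
    (∫ a in T, expPairing ν a) + ∫ a in T, expPairing (-ν) a =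
      ∫ a in parallelogram, expPairing ν a := by
  have hreflect : ∫ a in T, expPairing (-ν) a =
      ∫ a in (fun a => matCLM (-1) 0 0 (-1) a + (1, 1)) '' T, expPairing ν a := by
    rw [setIntegral_image_affine volume (by norm_num [matCLM_det]) _ isClosed_T.measurableSet]
    simp only [expPairing_neg_add, matCLM_det]
    norm_num
  have hcompact : IsCompact ((fun a => matCLM (-1) 0 0 (-1) a + (1, 1)) '' T) :=
    isCompact_T.image (by fun_prop)
  rw [hreflect, ← union_image_neg_add_T, setIntegral_union₀ ?_
    hcompact.measurableSet.nullMeasurableSet (integrableOn_expPairing ν isCompact_T)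
    (integrableOn_expPairing ν hcompact)]
  exact measure_mono_null inter_image_neg_add_T_subset (volume_setOf_fst_add_snd_eq 1)

theorem integral_expPairing_parallelogram (ν : ℤ × ℤ) (h : 3 ∣ ν.1 + 2 * ν.2) :
    ∫ a in parallelogram, expPairing ν a = if ν = 0 then 1 / 3 else 0 := by
  obtain ⟨b, hb⟩ := h
  have hcomp (x : ℝ × ℝ) : expPairing ν (matCLM (2 / 3) (1 / 3) (1 / 3) (2 / 3) x + 0) =
      Complex.exp (2 * π * Complex.I * (ν.1 + ν.2 - b : ℤ) * x.1) *
        Complex.exp (2 * π * Complex.I * b * x.2) := by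
    have hbC : (ν.1 : ℂ) + 2 * ν.2 = 3 * b := by exact_mod_cast hb
    rw [expPairing, ← Complex.exp_add]
    congr 1
    simp only [matCLM_apply, add_zero]
    push_cast
    linear_combination (2 * π * Complex.I * (x.2 - x.1) / 3) * hbC
  rw [parallelogram, setIntegral_image_affine volume (by norm_num [matCLM_det]) 0
    (measurableSet_Icc.prod measurableSet_Icc), matCLM_det]
  simp only [hcomp]
  rw [Measure.volume_eq_prod, setIntegral_prod_mul
    (fun s : ℝ => Complex.exp (2 * π * Complex.I * (ν.1 + ν.2 - b : ℤ) * s))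
    (fun t : ℝ => Complex.exp (2 * π * Complex.I * b * t)), integral_Icc_exp_two_pi_I_mul_int,
    integral_Icc_exp_two_pi_I_mul_int]
  have hν : ν = 0 ↔ ν.1 + ν.2 - b = 0 ∧ b = 0 := by
    constructor
    · rintro rfl
      simp at hb ⊢
      omega
    · rintro ⟨h₁, h₂⟩
      ext <;> simp <;> omega
  by_cases h₁ : ν.1 + ν.2 - b = 0 <;> by_cases h₂ : b = 0 <;> simp [hν, h₁, h₂] <;> norm_num

theorem integral_orbitSum (ν : ℤ × ℤ) : ∫ a in T, orbitSum ν a = if ν = 0 then 1 else 0 := by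
  simp only [orbitSum]
  rw [integral_finsetSum _ fun _ _ => integrableOn_expPairing _ isCompact_T, Fin.sum_univ_six]
  simp only [weylOrbit, Matrix.cons_val]
  have hswap : ∫ a in T, expPairing (-ν.swap) a = ∫ a in T, expPairing (-ν) a := by
    rw [integral_expPairing_swap (-ν), Prod.swap_neg]
  have horbit := integral_expPairing_rotate_orbit ν
  have horbit' := integral_expPairing_rotate_orbit (-ν.swap)
  simp only [Prod.fst_neg, Prod.snd_neg, Prod.fst_swap, Prod.snd_swap, hswap] at horbit'
  by_cases h : 3 ∣ ν.1 + 2 * ν.2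
  · rw [if_pos h] at horbit
    rw [if_pos (by omega)] at horbit'
    have hsum := integral_expPairing_add_neg ν
    rw [integral_expPairing_parallelogram ν h] at hsum
    have hδ : (if ν = 0 then (1 : ℂ) else 0) = 3 * if ν = 0 then 1 / 3 else 0 := by
      split_ifs <;> norm_num
    rw [hδ]
    linear_combination horbit + horbit' + 3 * hsum + hswap
  · rw [if_neg h] at horbit
    rw [if_neg (by omega)] at horbit'
    rw [if_neg (by rintro rfl; simp at h)]
    linear_combination horbit + horbit' + hswap

end A2

/-- Continuous orthogonality of the symmetric orbit functions of `A₂` on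
the fundamental domain `T`. -/
theorem Cfun_orthogonality (l m : ℕ × ℕ) :
    ∫ a in T, Cfun l a * (starRingEnd ℂ) (Cfun m a) =
      (if l = m then (1 : ℂ) else 0) / (hwt l : ℂ) := by
  have hproduct (a : ℝ × ℝ) : Cfun l a * (starRingEnd ℂ) (Cfun m a) =
      ((hwt l : ℂ) * hwt m)⁻¹ *
        ∑ j, A2.orbitSum (A2.weylOrbit (A2.toWeight l) j + -A2.toWeight m) a := by
    rw [A2.Cfun_eq, A2.Cfun_eq, map_mul, map_inv₀, map_natCast, A2.conj_orbitSum, mul_mul_mul_comm,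
      A2.orbitSum_mul, mul_inv]
  have hcount :
      ∑ j, (if A2.weylOrbit (A2.toWeight l) j + -A2.toWeight m = 0 then (1 : ℂ) else 0) =
        if l = m then (hwt l : ℂ) else 0 := by
    simp only [add_neg_eq_zero, Finset.sum_boole, A2.card_weylOrbit_eq]
    split_ifs <;> simp
  have hhwt : (hwt l : ℂ) ≠ 0 := by unfold hwt; split_ifs <;> norm_num
  simp only [hproduct]
  rw [integral_const_mul, integral_finsetSum _ fun _ _ => A2.integrableOn_orbitSum _ A2.isCompact_T]
  simp only [A2.integral_orbitSum, hcount]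
  split_ifs with h
  · subst h
    field_simp
  · simp

end
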